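/- arXiv:1501.06536 — 4 statements merged into one kernel-verified Lean document; each statement's English description precedes it below -/
import Mathlib

section
/- Let n ≥ 1, let m₁, m₂ > 0 be real numbers, let A₁, A₂ ∈ SO(n), let b₁, b₂ ∈ ℝⁿ, and let L₁, L₂ be symmetric positive semidefinite n×n real matrices of rank at least n−1, so that each map 𝓛ⱼ(Z) = Z Lⱼ + Lⱼ Z is a linear automorphism of the space of skew-symmetric n×n matrices. Equip V = (so(n) × ℝⁿ) × (so(n) × ℝⁿ) with the inner product ⟨((Y₁,y₁),(Y₂,y₂)), ((Z₁,z₁),(Z₂,z₂))⟩ = Σ_{j=1,2} mⱼ (Tr(Yⱼ Lⱼ Zⱼᵀ) + yⱼ·zⱼ). Then the impulse subspace 𝔠 = {((𝓛₁⁻¹(b₁ ∧ u₁), u₁), (𝓛₂⁻¹(b₂ ∧ u₂), u₂)) : u₁, u₂ ∈ ℝⁿ, m₁ A₁ u₁ + m₂ A₂ u₂ = 0} is the orthogonal complement in V of the non-slipping subspace 𝔖 = {((Z₁,z₁),(Z₂,z₂)) ∈ V : A₁(Z₁ b₁ + z₁) = A₂(Z₂ b₂ + z₂)}. -/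
open Matrix

/-- The wedge product of two vectors: `(a ∧ b)_{ij} = a_j * b_i − a_i * b_j`. -/
def wedge {n : ℕ} (a b : Fin n → ℝ) : Matrix (Fin n) (Fin n) ℝ :=
  Matrix.of fun i j => a j * b i - a i * b j

/-- States of the two-body system: pairs `((Z₁,z₁),(Z₂,z₂))` of (angular, linear) velocities,
an element of `(so(n) × ℝⁿ) × (so(n) × ℝⁿ)` once the skew-symmetry conditions are imposed. -/
abbrev RBState (n : ℕ) :=
  (Matrix (Fin n) (Fin n) ℝ × (Fin n → ℝ)) × (Matrix (Fin n) (Fin n) ℝ × (Fin n → ℝ))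

/-- The kinetic energy inner product
`⟨((Y₁,y₁),(Y₂,y₂)),((Z₁,z₁),(Z₂,z₂))⟩ = Σⱼ mⱼ (Tr(Yⱼ Lⱼ Zⱼᵀ) + yⱼ·zⱼ)`. -/
def kinInner {n : ℕ} (m₁ m₂ : ℝ) (L₁ L₂ : Matrix (Fin n) (Fin n) ℝ)
    (v w : RBState n) : ℝ :=
  m₁ * ((v.1.1 * L₁ * w.1.1ᵀ).trace + v.1.2 ⬝ᵥ w.1.2)
    + m₂ * ((v.2.1 * L₂ * w.2.1ᵀ).trace + v.2.2 ⬝ᵥ w.2.2)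

/-!
With the Frobenius pairing `⟨X, Z⟩ = tr(X Zᵀ)` on `so(n)`, symmetry of `L` gives
`⟨𝓛(Y), Z⟩ = 2 tr(Y L Zᵀ)` and one computes `⟨b ∧ u, Z⟩ = 2 u ⬝ (Z b)`. Hence, by
nondegeneracy of the pairing on `so(n)`, `𝓛ⱼ(Yⱼ) = bⱼ ∧ uⱼ` says exactly that
`tr(Yⱼ Lⱼ Zᵀ) = uⱼ ⬝ (Z bⱼ)` for all skew `Z`. Under these conditions the kinetic pairing
with `w ∈ 𝔖` collapses to `Σ mⱼ uⱼ ⬝ (Zⱼ bⱼ + zⱼ) = (m₁ A₁ u₁ + m₂ A₂ u₂) ⬝ p`, `p` being the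
common contact velocity, since the `Aⱼ` are orthogonal. Conversely, testing against
elements of `𝔖` moving only one body, and against pure translations, recovers the three
conditions.
-/

namespace Matrix

variable {ι R : Type*} [Fintype ι] [CommRing R]

lemma dotProduct_mulVec_eq_neg_of_transpose_eq_neg {Z : Matrix ι ι R} (hZ : Zᵀ = -Z)
    (b u : ι → R) : b ⬝ᵥ (Z *ᵥ u) = -(u ⬝ᵥ (Z *ᵥ b)) := by
  rw [dotProduct_mulVec, ← mulVec_transpose, hZ, neg_mulVec, neg_dotProduct, dotProduct_comm]

lemma trace_mul_add_mul_mul_transpose {L Y Z : Matrix ι ι R} (hL : Lᵀ = L)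
    (hY : Yᵀ = -Y) (hZ : Zᵀ = -Z) :
    ((Y * L + L * Y) * Zᵀ).trace = 2 * (Y * L * Zᵀ).trace := by
  have h : (L * Y * Zᵀ).trace = (Y * L * Zᵀ).trace := by
    calc (L * Y * Zᵀ).trace = (Z * (Yᵀ * Lᵀ)).trace := by
          rw [← trace_transpose, transpose_mul, transpose_mul, transpose_transpose]
      _ = (Y * L * Zᵀ).trace := by
          rw [hY, hL, hZ, trace_mul_comm]; simp
  rw [add_mul, trace_add, h]; ring

lemma mulVec_dotProduct_mulVec_of_transpose_mul_eq_one [DecidableEq ι] {A : Matrix ι ι R}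
    (hA : Aᵀ * A = 1) (x y : ι → R) : (A *ᵥ x) ⬝ᵥ (A *ᵥ y) = x ⬝ᵥ y := by
  rw [dotProduct_mulVec, ← mulVec_transpose, mulVec_mulVec, hA, one_mulVec]

lemma mulVec_add_mulVec_eq_zero_iff [DecidableEq ι] {A₁ A₂ : Matrix ι ι R}
    (h₁ : A₁ᵀ * A₁ = 1) (h₂ : A₂ᵀ * A₂ = 1) (x₁ x₂ : ι → R) :
    A₁ *ᵥ x₁ + A₂ *ᵥ x₂ = 0 ↔
      ∀ z₁ z₂, A₁ *ᵥ z₁ = A₂ *ᵥ z₂ → x₁ ⬝ᵥ z₁ + x₂ ⬝ᵥ z₂ = 0 := by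
  constructor
  · intro h z₁ z₂ hz
    rw [← mulVec_dotProduct_mulVec_of_transpose_mul_eq_one h₁ x₁,
      ← mulVec_dotProduct_mulVec_of_transpose_mul_eq_one h₂ x₂, ← hz, ← add_dotProduct, h,
      zero_dotProduct]
  · intro h
    refine dotProduct_eq_zero _ fun c => ?_
    have hc : ∀ {A : Matrix ι ι R}, Aᵀ * A = 1 → A *ᵥ (Aᵀ *ᵥ c) = c := fun hA => by
      rw [mulVec_mulVec, mul_eq_one_comm.mp hA, one_mulVec]
    have := h (A₁ᵀ *ᵥ c) (A₂ᵀ *ᵥ c) (by rw [hc h₁, hc h₂])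
    rwa [dotProduct_transpose_mulVec, dotProduct_transpose_mulVec, dotProduct_comm c,
      dotProduct_comm c, ← add_dotProduct] at this

end Matrix

section Wedge

variable {n : ℕ}

lemma wedge_transpose (b u : Fin n → ℝ) : (wedge b u)ᵀ = -wedge b u := by
  ext i j; simp [wedge]

lemma trace_wedge_mul_transpose {Z : Matrix (Fin n) (Fin n) ℝ} (hZ : Zᵀ = -Z)
    (b u : Fin n → ℝ) : (wedge b u * Zᵀ).trace = 2 * (u ⬝ᵥ (Z *ᵥ b)) := by
  have h : (wedge b u * Zᵀ).trace = u ⬝ᵥ (Z *ᵥ b) - b ⬝ᵥ (Z *ᵥ u) := by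
    simp only [trace, diag, mul_apply, transpose_apply, wedge, of_apply, dotProduct,
      mulVec, ← Finset.sum_sub_distrib, Finset.mul_sum]
    exact Finset.sum_congr rfl fun i _ => Finset.sum_congr rfl fun j _ => by ring
  rw [h, dotProduct_mulVec_eq_neg_of_transpose_eq_neg hZ]; ring

lemma mul_add_mul_eq_wedge_iff {L Y : Matrix (Fin n) (Fin n) ℝ} (hL : Lᵀ = L)
    (hY : Yᵀ = -Y) (b u : Fin n → ℝ) :
    Y * L + L * Y = wedge b u ↔
      ∀ Z : Matrix (Fin n) (Fin n) ℝ, Zᵀ = -Z → (Y * L * Zᵀ).trace = u ⬝ᵥ (Z *ᵥ b) := by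
  constructor
  · intro h Z hZ
    have := trace_mul_add_mul_mul_transpose hL hY hZ
    rw [h, trace_wedge_mul_transpose hZ] at this
    linarith
  · intro h
    set S := Y * L + L * Y - wedge b u
    have hS : Sᵀ = -S := by
      simp only [S, transpose_sub, transpose_add, transpose_mul, hL, hY, wedge_transpose,
        mul_neg, neg_mul]
      abel
    have hSS : (S * Sᴴ).trace = 0 := by
      rw [conjTranspose_eq_transpose_of_trivial, sub_mul, trace_sub,
        trace_mul_add_mul_mul_transpose hL hY hS, trace_wedge_mul_transpose hS, h S hS, sub_self]
    exact sub_eq_zero.mp (trace_mul_conjTranspose_self_eq_zero_iff.mp hSS)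

end Wedge

theorem impulse_subspace_eq_orthogonal_complement_of_nonslipping_general
    (n : ℕ) (m₁ m₂ : ℝ) (hm₁ : 0 < m₁) (hm₂ : 0 < m₂)
    (A₁ A₂ : Matrix (Fin n) (Fin n) ℝ)
    (hA₁ : A₁ᵀ * A₁ = 1)
    (hA₂ : A₂ᵀ * A₂ = 1)
    (b₁ b₂ : Fin n → ℝ)
    (L₁ L₂ : Matrix (Fin n) (Fin n) ℝ)
    (hL₁ : L₁.PosSemidef) (hL₂ : L₂.PosSemidef) :
    ∀ v : RBState n, v.1.1ᵀ = -v.1.1 → v.2.1ᵀ = -v.2.1 →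
      ((v.1.1 * L₁ + L₁ * v.1.1 = wedge b₁ v.1.2 ∧
        v.2.1 * L₂ + L₂ * v.2.1 = wedge b₂ v.2.2 ∧
        m₁ • (A₁ *ᵥ v.1.2) + m₂ • (A₂ *ᵥ v.2.2) = 0)
        ↔ ∀ w : RBState n, w.1.1ᵀ = -w.1.1 → w.2.1ᵀ = -w.2.1 →
            A₁ *ᵥ (w.1.1 *ᵥ b₁ + w.1.2) = A₂ *ᵥ (w.2.1 *ᵥ b₂ + w.2.2) →
            kinInner m₁ m₂ L₁ L₂ v w = 0) := by
  have hL₁s : L₁ᵀ = L₁ := (isHermitian_iff_isSymm.mp hL₁.1).eq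
  have hL₂s : L₂ᵀ = L₂ := (isHermitian_iff_isSymm.mp hL₂.1).eq
  rintro ⟨⟨Y₁, u₁⟩, ⟨Y₂, u₂⟩⟩ hY₁ hY₂
  dsimp only at hY₁ hY₂ ⊢
  rw [mul_add_mul_eq_wedge_iff hL₁s hY₁, mul_add_mul_eq_wedge_iff hL₂s hY₂, ← mulVec_smul,
    ← mulVec_smul, mulVec_add_mulVec_eq_zero_iff hA₁ hA₂]
  simp only [smul_dotProduct, smul_eq_mul]
  constructor
  · rintro ⟨h₁, h₂, hp⟩ ⟨⟨Z₁, z₁⟩, ⟨Z₂, z₂⟩⟩ hZ₁ hZ₂ hw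
    have := hp _ _ hw
    rw [dotProduct_add, dotProduct_add] at this
    simp only [kinInner, h₁ Z₁ hZ₁, h₂ Z₂ hZ₂]
    linarith
  · intro h
    -- Test against `((Z, -Z b₁), 0)` and `(0, (Z, -Z b₂))`, whose contact velocities vanish,
    -- and against pure translations.
    refine ⟨fun Z hZ => ?_, fun Z hZ => ?_, fun z₁ z₂ hz => ?_⟩
    · have := h ((Z, -(Z *ᵥ b₁)), (0, 0)) hZ (by simp) (by simp)
      simp only [kinInner, dotProduct_neg, transpose_zero, mul_zero, trace_zero,
        dotProduct_zero, add_zero, mul_eq_zero, hm₁.ne', false_or] at this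
      linarith
    · have := h ((0, 0), (Z, -(Z *ᵥ b₂))) (by simp) hZ (by simp)
      simp only [kinInner, dotProduct_neg, transpose_zero, mul_zero, trace_zero,
        dotProduct_zero, add_zero, zero_add, mul_eq_zero, hm₂.ne', false_or] at this
      linarith
    · simpa [kinInner] using h ((0, z₁), (0, z₂)) (by simp) (by simp) (by simpa using hz)

/-- The impulse subspace
`𝔠 = {((𝓛₁⁻¹(b₁ ∧ u₁), u₁), (𝓛₂⁻¹(b₂ ∧ u₂), u₂)) : m₁ A₁ u₁ + m₂ A₂ u₂ = 0}`
(described by the conditions `𝓛ⱼ(Yⱼ) = bⱼ ∧ uⱼ`, which determine `Yⱼ` in `so(n)` uniquely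
since each `𝓛ⱼ(Z) = Z Lⱼ + Lⱼ Z` is a linear automorphism of `so(n)` under the rank
hypothesis) is the orthogonal complement, inside
`V = (so(n) × ℝⁿ) × (so(n) × ℝⁿ)` with the kinetic energy inner product, of the
non-slipping subspace `𝔖 = {((Z₁,z₁),(Z₂,z₂)) : A₁(Z₁ b₁ + z₁) = A₂(Z₂ b₂ + z₂)}`. -/
theorem impulse_subspace_eq_orthogonal_complement_of_nonslipping
    (n : ℕ) (hn : 1 ≤ n) (m₁ m₂ : ℝ) (hm₁ : 0 < m₁) (hm₂ : 0 < m₂)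
    (A₁ A₂ : Matrix (Fin n) (Fin n) ℝ)
    (hA₁ : A₁ᵀ * A₁ = 1) (hA₁det : A₁.det = 1)
    (hA₂ : A₂ᵀ * A₂ = 1) (hA₂det : A₂.det = 1)
    (b₁ b₂ : Fin n → ℝ)
    (L₁ L₂ : Matrix (Fin n) (Fin n) ℝ)
    (hL₁ : L₁.PosSemidef) (hL₂ : L₂.PosSemidef)
    (hr₁ : n - 1 ≤ L₁.rank) (hr₂ : n - 1 ≤ L₂.rank) :
    ∀ v : RBState n, v.1.1ᵀ = -v.1.1 → v.2.1ᵀ = -v.2.1 →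
      ((v.1.1 * L₁ + L₁ * v.1.1 = wedge b₁ v.1.2 ∧
        v.2.1 * L₂ + L₂ * v.2.1 = wedge b₂ v.2.2 ∧
        m₁ • (A₁ *ᵥ v.1.2) + m₂ • (A₂ *ᵥ v.2.2) = 0)
        ↔ ∀ w : RBState n, w.1.1ᵀ = -w.1.1 → w.2.1ᵀ = -w.2.1 →
            A₁ *ᵥ (w.1.1 *ᵥ b₁ + w.1.2) = A₂ *ᵥ (w.2.1 *ᵥ b₂ + w.2.2) →
            kinInner m₁ m₂ L₁ L₂ v w = 0) :=
  impulse_subspace_eq_orthogonal_complement_of_nonslipping_general n m₁ m₂ hm₁ hm₂ A₁ A₂ hA₁ hA₂ b₁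
    b₂ L₁ L₂ hL₁ hL₂
end

section
/- Let L be a symmetric positive semidefinite n×n real matrix whose rank is at least n−1. Then the linear map 𝓛(Z) = Z L + L Z maps the space of skew-symmetric n×n real matrices bijectively onto itself, and the bilinear form (Z₁, Z₂) ↦ (1/2) Tr(𝓛(Z₁) Z₂ᵀ) on the space of skew-symmetric n×n real matrices is symmetric and positive definite (an inner product). -/
/-!
On skew-symmetric matrices, `tr((Z L + L Z) Zᵀ) = 2 tr(Zᵀ L Z)`, which for positive semidefinite
`L` is nonnegative and vanishes only when `L Z = 0`. Then every column of `Z` lies in `ker L`, a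
space of dimension at most one, so `Z` has rank at most one; a skew-symmetric matrix of rank at
most one is zero, since `Z i j * Z j i = Z i i * Z j j = 0`. Hence the form is positive definite,
`𝓛` is injective on `so(n)`, and bijective by finite-dimensionality.
-/

open Matrix

namespace Matrix

variable {ι : Type*}

theorem vecMulVec_eq_zero_of_transpose_eq_neg {R : Type*} [CommRing R] [NoZeroDivisors R]
    [IsAddTorsionFree R] {v w : ι → R} (h : (vecMulVec v w)ᵀ = -vecMulVec v w) :
    vecMulVec v w = 0 := by
  have hskew (i j : ι) : v j * w i = -(v i * w j) := by
    simpa [vecMulVec_apply] using congrFun (congrFun h i) j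
  have hdiag (i : ι) : v i * w i = 0 := self_eq_neg.mp (hskew i i)
  ext i j
  have hsq : (v i * w j) ^ 2 = 0 := by
    calc (v i * w j) ^ 2 = -((v i * w j) * (v j * w i)) := by rw [hskew]; ring
      _ = -((v i * w i) * (v j * w j)) := by ring
      _ = 0 := by rw [hdiag, zero_mul, neg_zero]
  rw [vecMulVec_apply, zero_apply]
  exact pow_eq_zero_iff two_ne_zero |>.mp hsq

variable [Fintype ι]

section CommRing

variable {R : Type*} [CommRing R] {L Z : Matrix ι ι R}

theorem transpose_mul_add_mul_of_isSymm (hL : L.IsSymm) (hZ : Zᵀ = -Z) :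
    (Z * L + L * Z)ᵀ = -(Z * L + L * Z) := by
  rw [transpose_add, transpose_mul, transpose_mul, hZ, hL.eq, mul_neg, neg_mul, add_comm, neg_add]

theorem trace_mul_add_mul_mul_transpose_comm (hL : L.IsSymm) (Z₁ Z₂ : Matrix ι ι R) :
    ((Z₁ * L + L * Z₁) * Z₂ᵀ).trace = ((Z₂ * L + L * Z₂) * Z₁ᵀ).trace := by
  have h₁ : (Z₁ * L * Z₂ᵀ).trace = (Z₂ * L * Z₁ᵀ).trace := by
    rw [← trace_transpose, transpose_mul, transpose_mul, transpose_transpose, hL.eq, ← mul_assoc]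
  have h₂ : (L * Z₁ * Z₂ᵀ).trace = (L * Z₂ * Z₁ᵀ).trace := by
    rw [← trace_transpose, transpose_mul, transpose_mul, transpose_transpose, hL.eq, ← mul_assoc,
      trace_mul_cycle]
  rw [add_mul, add_mul, trace_add, trace_add, h₁, h₂]

theorem trace_mul_add_mul_mul_transpose_self (hZ : Zᵀ = -Z) :
    ((Z * L + L * Z) * Zᵀ).trace = 2 * (Zᵀ * L * Z).trace := by
  have h₁ : Z * L * Zᵀ = Zᵀ * L * Z := by
    rw [hZ, mul_neg, neg_mul, neg_mul]
  rw [add_mul, trace_add, h₁, trace_mul_cycle L, two_mul]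

end CommRing

theorem eq_zero_of_transpose_eq_neg_of_mul_eq_zero {K : Type*} [Field K] [CharZero K]
    {L Z : Matrix ι ι K} (hrank : Fintype.card ι - 1 ≤ L.rank) (hZ : Zᵀ = -Z)
    (hLZ : L * Z = 0) : Z = 0 := by
  have hker : Module.finrank K (LinearMap.ker L.mulVecLin) ≤ 1 := by
    have := LinearMap.finrank_range_add_finrank_ker L.mulVecLin
    rw [Module.finrank_fintype_fun_eq_card] at this
    unfold rank at hrank
    omega
  obtain ⟨v, hv⟩ := finrank_le_one_iff.mp hker
  have hcol (j : ι) : Zᵀ j ∈ LinearMap.ker L.mulVecLin := by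
    rw [LinearMap.mem_ker, mulVecLin_apply]
    ext i
    exact congrFun (congrFun hLZ i) j
  choose c hc using fun j => hv ⟨Zᵀ j, hcol j⟩
  have hZv : Z = vecMulVec (v : ι → K) c := by
    ext i j
    rw [vecMulVec_apply, mul_comm, ← transpose_apply Z j i]
    exact congrFun (congrArg Subtype.val (hc j)).symm i
  rw [hZv] at hZ ⊢
  exact vecMulVec_eq_zero_of_transpose_eq_neg hZ

open scoped MatrixOrder ComplexOrder in
theorem PosSemidef.trace_conjTranspose_mul_mul_eq_zero_iff {𝕜 : Type*} [RCLike 𝕜]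
    {m : Type*} [Fintype m] {M : Matrix ι ι 𝕜} (hM : M.PosSemidef) (A : Matrix ι m 𝕜) :
    (Aᴴ * M * A).trace = 0 ↔ M * A = 0 := by
  classical
  obtain ⟨B, rfl⟩ := CStarAlgebra.nonneg_iff_eq_star_mul_self.mp hM.nonneg
  rw [star_eq_conjTranspose]
  refine ⟨fun h => ?_, fun h => by rw [Matrix.mul_assoc, h, Matrix.mul_zero, trace_zero]⟩
  have hBA : B * A = 0 := by
    rwa [show Aᴴ * (Bᴴ * B) * A = (B * A)ᴴ * (B * A) by
        simp only [conjTranspose_mul, Matrix.mul_assoc],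
      trace_conjTranspose_mul_self_eq_zero_iff] at h
  rw [Matrix.mul_assoc, hBA, Matrix.mul_zero]

theorem trace_transpose_mul_mul_pos {L Z : Matrix ι ι ℝ} (hL : L.PosSemidef)
    (hrank : Fintype.card ι - 1 ≤ L.rank) (hZ : Zᵀ = -Z) (hZ0 : Z ≠ 0) :
    0 < (Zᵀ * L * Z).trace := by
  have hnonneg : 0 ≤ (Zᵀ * L * Z).trace := (hL.conjTranspose_mul_mul_same Z).trace_nonneg
  refine hnonneg.lt_of_ne' fun h0 => hZ0 ?_
  exact eq_zero_of_transpose_eq_neg_of_mul_eq_zero hrank hZ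
    ((hL.trace_conjTranspose_mul_mul_eq_zero_iff Z).mp h0)

theorem existsUnique_transpose_eq_neg_mul_add_mul_eq [DecidableEq ι] {K : Type*} [Field K]
    {L W : Matrix ι ι K} (hL : L.IsSymm)
    (hinj : ∀ Z : Matrix ι ι K, Zᵀ = -Z → Z * L + L * Z = 0 → Z = 0) (hW : Wᵀ = -W) :
    ∃! Z : Matrix ι ι K, Zᵀ = -Z ∧ Z * L + L * Z = W := by
  let S : Submodule K (Matrix ι ι K) := LieAlgebra.Orthogonal.so ι K
  have hS (Z : Matrix ι ι K) : Z ∈ S ↔ Zᵀ = -Z := LieAlgebra.Orthogonal.mem_so ι K Z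
  let f : S →ₗ[K] S := (LinearMap.mulRight K L + LinearMap.mulLeft K L).restrict fun Z hZ =>
    (hS _).mpr <| transpose_mul_add_mul_of_isSymm hL <| (hS Z).mp hZ
  have hf : Function.Injective f := by
    rw [← LinearMap.ker_eq_bot, LinearMap.ker_eq_bot']
    rintro ⟨Z, hZ⟩ h
    exact Subtype.ext <| hinj Z ((hS Z).mp hZ) (congrArg Subtype.val h)
  obtain ⟨⟨Z, hZ⟩, hfZ⟩ := LinearMap.injective_iff_surjective.mp hf ⟨W, (hS W).mpr hW⟩
  refine ⟨Z, ⟨(hS Z).mp hZ, congrArg Subtype.val hfZ⟩, ?_⟩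
  rintro Y ⟨hY, hYW⟩
  exact congrArg Subtype.val <| @hf ⟨Y, (hS Y).mpr hY⟩ ⟨Z, hZ⟩ <|
    Subtype.ext <| hYW.trans (congrArg Subtype.val hfZ).symm

end Matrix

/-- For a symmetric positive semidefinite `L` of rank at least `n−1`, the map
`𝓛(Z) = Z L + L Z` is a bijection of the space of skew-symmetric matrices onto itself, and
`(Z₁, Z₂) ↦ (1/2) Tr(𝓛(Z₁) Z₂ᵀ)` is a symmetric positive definite bilinear form on that space. -/
theorem calL_bijective_and_posdef {n : ℕ} (L : Matrix (Fin n) (Fin n) ℝ)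
    (hL : L.PosSemidef) (hrank : n - 1 ≤ L.rank) :
    (∀ Z : Matrix (Fin n) (Fin n) ℝ, Zᵀ = -Z → (Z * L + L * Z)ᵀ = -(Z * L + L * Z)) ∧
    (∀ W : Matrix (Fin n) (Fin n) ℝ, Wᵀ = -W →
      ∃! Z : Matrix (Fin n) (Fin n) ℝ, Zᵀ = -Z ∧ Z * L + L * Z = W) ∧
    (∀ Z₁ Z₂ : Matrix (Fin n) (Fin n) ℝ, Z₁ᵀ = -Z₁ → Z₂ᵀ = -Z₂ →
      (1 / 2) * ((Z₁ * L + L * Z₁) * Z₂ᵀ).trace = (1 / 2) * ((Z₂ * L + L * Z₂) * Z₁ᵀ).trace) ∧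
    (∀ Z : Matrix (Fin n) (Fin n) ℝ, Zᵀ = -Z → Z ≠ 0 →
      0 < (1 / 2) * ((Z * L + L * Z) * Zᵀ).trace) := by
  have hLsymm : L.IsSymm := isHermitian_iff_isSymm.mp hL.isHermitian
  have hrank' : Fintype.card (Fin n) - 1 ≤ L.rank := by rwa [Fintype.card_fin]
  have hpos (Z : Matrix (Fin n) (Fin n) ℝ) (hZ : Zᵀ = -Z) (hZ0 : Z ≠ 0) :
      0 < (1 / 2) * ((Z * L + L * Z) * Zᵀ).trace := by
    rw [trace_mul_add_mul_mul_transpose_self hZ]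
    linarith [trace_transpose_mul_mul_pos hL hrank' hZ hZ0]
  refine ⟨fun Z hZ => transpose_mul_add_mul_of_isSymm hLsymm hZ,
    fun W hW => existsUnique_transpose_eq_neg_mul_add_mul_eq hLsymm ?_ hW,
    fun Z₁ Z₂ _ _ => by rw [trace_mul_add_mul_mul_transpose_comm hLsymm], hpos⟩
  intro Z hZ hLZ
  by_contra hZ0
  simpa [hLZ] using hpos Z hZ hZ0
end

section
/- Let A ∈ SO(n), let a, z, w ∈ ℝⁿ, let W and Z be skew-symmetric n×n real matrices, and let L be a symmetric n×n real matrix, with 𝓛(Z) = Z L + L Z. Then (1/2) Tr(𝓛(Z) (Aᵀ W A)ᵀ) + z·(Aᵀ w + Aᵀ W a) = (1/2) Tr((A 𝓛(Z) Aᵀ + a ∧ (A z)) Wᵀ) + (A z)·w. (This is the identity behind the formula for the momentum map of the left SE(n)-action: 𝒫^𝔤(g, v)(ξ) = (m/2) Tr{(Ad_A 𝓛(Z) + x_c ∧ v_c) Wᵀ} + m v_c·w, with x_c = a the center of mass and v_c = A z its velocity.) -/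
open Matrix

/-- The identity behind the formula for the momentum map of the left `SE(n)`-action. -/
theorem momentum_map_identity {n : ℕ} (A : Matrix (Fin n) (Fin n) ℝ)
    (hA : Aᵀ * A = 1) (hdet : A.det = 1)
    (a z w : Fin n → ℝ) (W Z L : Matrix (Fin n) (Fin n) ℝ)
    (hW : Wᵀ = -W) (hZ : Zᵀ = -Z) (hL : Lᵀ = L) :
    (1 / 2) * ((Z * L + L * Z) * (Aᵀ * W * A)ᵀ).trace
        + z ⬝ᵥ (Aᵀ *ᵥ w + Aᵀ *ᵥ (W *ᵥ a))
      = (1 / 2) * ((A * (Z * L + L * Z) * Aᵀ + wedge a (A *ᵥ z)) * Wᵀ).trace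
        + (A *ᵥ z) ⬝ᵥ w := by
  set S := Z * L + L * Z with hS
  set v := A *ᵥ z with hv
  have hW' : ∀ i j : Fin n, W j i = -W i j := fun i j => by
    have := congrFun (congrFun hW i) j
    simpa using this
  -- trace of the wedge part
  have hwedge : (wedge a v * Wᵀ).trace = 2 * (v ⬝ᵥ W *ᵥ a) := by
    have key : ∑ i : Fin n, ∑ j : Fin n,
        ((a j * v i - a i * v j) * W i j - 2 * (v i * (W i j * a j))) = 0 := by
      set f : Fin n → Fin n → ℝ :=
        fun i j => (a j * v i - a i * v j) * W i j - 2 * (v i * (W i j * a j)) with hf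
      have hsymm : ∑ i : Fin n, ∑ j : Fin n, f i j = ∑ i : Fin n, ∑ j : Fin n, f j i :=
        Finset.sum_comm
      have hzero : ∀ i j : Fin n, f i j + f j i = 0 := by
        intro i j
        simp only [hf]
        rw [hW' i j]
        ring
      have h2 : (∑ i : Fin n, ∑ j : Fin n, f i j) + (∑ i : Fin n, ∑ j : Fin n, f i j) = 0 := by
        nth_rewrite 2 [hsymm]
        rw [← Finset.sum_add_distrib]
        simp only [← Finset.sum_add_distrib]
        simp [hzero]
      linarith
    simp only [Matrix.trace, Matrix.diag_apply, Matrix.mul_apply, wedge, Matrix.of_apply,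
      Matrix.transpose_apply, dotProduct, Matrix.mulVec, Finset.mul_sum]
    rw [← sub_eq_zero, ← Finset.sum_sub_distrib]
    simp only [← Finset.sum_sub_distrib]
    exact key
  -- the main trace part
  have htr : (S * (Aᵀ * W * A)ᵀ).trace = (A * S * Aᵀ * Wᵀ).trace := by
    rw [Matrix.transpose_mul, Matrix.transpose_mul, Matrix.transpose_transpose]
    calc (S * (Aᵀ * (Wᵀ * A))).trace
        = ((S * Aᵀ * Wᵀ) * A).trace := by rw [Matrix.mul_assoc, Matrix.mul_assoc]
      _ = (A * (S * Aᵀ * Wᵀ)).trace := trace_mul_comm _ _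
      _ = (A * S * Aᵀ * Wᵀ).trace := by rw [← Matrix.mul_assoc, ← Matrix.mul_assoc]
  -- dot product identities
  have hd1 : z ⬝ᵥ Aᵀ *ᵥ w = v ⬝ᵥ w := by
    rw [hv, Matrix.dotProduct_mulVec, Matrix.vecMul_transpose]
  have hd2 : z ⬝ᵥ Aᵀ *ᵥ (W *ᵥ a) = v ⬝ᵥ W *ᵥ a := by
    rw [hv, Matrix.dotProduct_mulVec, Matrix.vecMul_transpose]
  rw [dotProduct_add, hd1, hd2, Matrix.add_mul (A * S * Aᵀ) (wedge a v) Wᵀ,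
    Matrix.trace_add, hwedge, htr]
  ring
end

section
/- Let ν ∈ ℝ² be a unit vector and let J ∈ SO(2) be the rotation by π/2 counterclockwise. Define the linear map R_ν : ℝ × ℝ² → ℝ × ℝ² by R_ν(v₀, v) = (v₀⁺, v⁺) where v₀⁺ = −(1/3) v₀ + (2√2/3) v·(Jν) and v⁺ = [(2√2/3) v₀ + (1/3) v·(Jν)] Jν − (v·ν) ν. Then R_ν is a linear isometric involution of ℝ × ℝ² ≅ ℝ³ with the standard Euclidean inner product: R_ν² = Id and (v₀⁺)² + ‖v⁺‖² = v₀² + ‖v‖² for all (v₀, v). -/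
open Matrix

/-- Rotation of `ℝ²` by `π/2` counterclockwise. -/
def Jrot : Matrix (Fin 2) (Fin 2) ℝ := !![0, -1; 1, 0]

/-- The completely rough reflection law in dimension `2` for a disc of uniform mass
distribution, in the rescaled coordinates `(v₀, v)`. -/
noncomputable def roughReflect (ν : Fin 2 → ℝ) (p : ℝ × (Fin 2 → ℝ)) : ℝ × (Fin 2 → ℝ) :=
  (-(1 / 3) * p.1 + (2 * Real.sqrt 2 / 3) * (p.2 ⬝ᵥ (Jrot *ᵥ ν)),
    ((2 * Real.sqrt 2 / 3) * p.1 + (1 / 3) * (p.2 ⬝ᵥ (Jrot *ᵥ ν))) • (Jrot *ᵥ ν)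
      - (p.2 ⬝ᵥ ν) • ν)

lemma Jrot_mulVec (ν : Fin 2 → ℝ) : Jrot *ᵥ ν = ![-(ν 1), ν 0] := by
  funext i
  fin_cases i <;> simp [Jrot, mulVec, dotProduct, Fin.sum_univ_two]

/-- The rough reflection law is a linear isometric involution of `ℝ × ℝ² ≅ ℝ³`. -/
theorem roughReflect_isometric_involution (ν : Fin 2 → ℝ) (hν : ν ⬝ᵥ ν = 1) :
    IsLinearMap ℝ (roughReflect ν) ∧
    (∀ p : ℝ × (Fin 2 → ℝ), roughReflect ν (roughReflect ν p) = p) ∧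
    (∀ p : ℝ × (Fin 2 → ℝ),
      (roughReflect ν p).1 ^ 2 + (roughReflect ν p).2 ⬝ᵥ (roughReflect ν p).2
        = p.1 ^ 2 + p.2 ⬝ᵥ p.2) := by
  have hν' : ν 0 ^ 2 + ν 1 ^ 2 = 1 := by
    simpa [dotProduct, Fin.sum_univ_two, sq] using hν
  have hs : Real.sqrt 2 ^ 2 = 2 := Real.sq_sqrt (by norm_num)
  set s := Real.sqrt 2 with hs_def
  set a := ν 0 with ha
  set b := ν 1 with hb
  refine ⟨⟨fun p q => ?_, fun c p => ?_⟩, fun p => ?_, fun p => ?_⟩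
  · refine Prod.ext ?_ (funext fun i => ?_)
    · simp [roughReflect, Jrot_mulVec, dotProduct, Fin.sum_univ_two]
      ring
    · fin_cases i <;>
        simp [roughReflect, Jrot_mulVec, dotProduct, Fin.sum_univ_two,
          Matrix.vecHead, Matrix.vecTail, Pi.smul_apply, smul_eq_mul] <;> ring
  · refine Prod.ext ?_ (funext fun i => ?_)
    · simp [roughReflect, Jrot_mulVec, dotProduct, Fin.sum_univ_two, smul_eq_mul]
      ring
    · fin_cases i <;>
        simp [roughReflect, Jrot_mulVec, dotProduct, Fin.sum_univ_two,
          Matrix.vecHead, Matrix.vecTail, Pi.smul_apply, smul_eq_mul] <;> ring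
  · refine Prod.ext ?_ (funext fun i => ?_)
    · simp only [roughReflect, Jrot_mulVec, dotProduct, Fin.sum_univ_two,
        Matrix.cons_val_zero, Matrix.cons_val_one, Matrix.head_cons, Pi.sub_apply,
        Pi.smul_apply, smul_eq_mul, ← ha, ← hb]
      linear_combination
        (4/9 * p.1 * b^2 + 4/9 * p.1 * a^2) * hs +
        (8/9 * p.1 + 2/9 * s * p.2 1 * a - 2/9 * s * p.2 0 * b) * hν'
    · fin_cases i <;>
        simp only [roughReflect, Jrot_mulVec, dotProduct, Fin.sum_univ_two,
          Matrix.cons_val_zero, Matrix.cons_val_one, Matrix.head_cons, Pi.sub_apply,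
          Pi.smul_apply, smul_eq_mul, Fin.zero_eta, Fin.mk_one, ← ha, ← hb]
      · linear_combination
          (-4/9 * p.2 1 * a * b + 4/9 * p.2 0 * b^2) * hs +
          (8/9 * p.2 1 * a * b + p.2 0 + 1/9 * p.2 0 * b^2 + p.2 0 * a^2
            - 2/9 * s * p.1 * b) * hν'
      · linear_combination
          (4/9 * p.2 1 * a^2 - 4/9 * p.2 0 * a * b) * hs +
          (p.2 1 + p.2 1 * b^2 + 1/9 * p.2 1 * a^2 + 8/9 * p.2 0 * a * b
            + 2/9 * s * p.1 * a) * hν'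
  · simp only [roughReflect, Jrot_mulVec, dotProduct, Fin.sum_univ_two,
      Matrix.cons_val_zero, Matrix.cons_val_one, Matrix.head_cons, Pi.sub_apply,
      Pi.smul_apply, smul_eq_mul, ← ha, ← hb]
    linear_combination
      (4/9 * p.2 1^2 * a^2 - 8/9 * p.2 0 * p.2 1 * a * b + 4/9 * p.2 0^2 * b^2
        + 4/9 * p.1^2 * b^2 + 4/9 * p.1^2 * a^2) * hs +
      (p.2 1^2 + p.2 1^2 * b^2 + 1/9 * p.2 1^2 * a^2 + 16/9 * p.2 0 * p.2 1 * a * b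
        + p.2 0^2 + 1/9 * p.2 0^2 * b^2 + p.2 0^2 * a^2 + 8/9 * p.1^2
        + 4/9 * s * p.1 * p.2 1 * a - 4/9 * s * p.1 * p.2 0 * b) * hν'
end
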